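/- Let D be a diagonal positive definite matrix, f : ℝⁿ → ℝ twice continuously differentiable with Hessian Lipschitz with constant L_{∇²f}. Then sup over ‖D⁻¹δ‖_∞ ≤ 1 of f(x_c + δ) is at most f(x_c) + ‖D∇f(x_c)‖₁ + (n/2)·max(λ_max(D∇²f(x_c)D), 0) + (L_{∇²f}/6)‖D‖_F³. -/

import Mathlib

/-!
Restrict `f` to the segment `t ↦ x_c + t δ`. The Lipschitz Hessian bounds the second derivative
of the restriction by its value at `0` plus `L ‖δ‖³ t`; integrating twice gives the cubic Taylor
bound `f (x_c + δ) ≤ f x_c + ⟪∇f, δ⟫ + ⟪∇²f δ, δ⟫ / 2 + L ‖δ‖³ / 6`. On the box `|δᵢ| ≤ dᵢ` the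
linear term is at most `‖D ∇f‖₁`; writing `δ = D u` with `|uᵢ| ≤ 1` turns the quadratic term into
`⟪D ∇²f D u, u⟫ ≤ λ_max ‖u‖² ≤ n max(λ_max, 0)`; and `‖δ‖ ≤ ‖D‖_F`.
-/

open Set
open scoped RealInnerProductSpace Matrix

theorem sub_le_sub_of_hasDerivAt_le {a b a' b' : ℝ → ℝ} {x y : ℝ} (hxy : x ≤ y)
    (ha : ∀ t, HasDerivAt a (a' t) t) (hb : ∀ t, HasDerivAt b (b' t) t)
    (hle : ∀ t ∈ Ioo x y, a' t ≤ b' t) : a y - a x ≤ b y - b x := by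
  have hderiv : ∀ t, HasDerivAt (b - a) (b' t - a' t) t := fun t => (hb t).sub (ha t)
  have hmono : MonotoneOn (b - a) (Icc x y) := by
    refine monotoneOn_of_hasDerivWithinAt_nonneg (convex_Icc x y)
      (fun t _ => (hderiv t).continuousAt.continuousWithinAt)
      (fun t _ => (hderiv t).hasDerivWithinAt) fun t ht => ?_
    rw [interior_Icc] at ht
    exact sub_nonneg.2 (hle t ht)
  have := hmono (left_mem_Icc.2 hxy) (right_mem_Icc.2 hxy) hxy
  simp only [Pi.sub_apply] at this
  linarith

theorem image_one_le_of_deriv2_le_add_mul {φ φ' φ'' : ℝ → ℝ} {M : ℝ}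
    (hφ : ∀ t, HasDerivAt φ (φ' t) t) (hφ' : ∀ t, HasDerivAt φ' (φ'' t) t)
    (hφ'' : ∀ t ∈ Icc (0 : ℝ) 1, φ'' t ≤ φ'' 0 + M * t) :
    φ 1 ≤ φ 0 + φ' 0 + φ'' 0 / 2 + M / 6 := by
  have hpoly : ∀ (a b c t : ℝ), HasDerivAt (fun s => a * s + b * s ^ 2 / 2 + c * s ^ 3 / 6)
      (a + b * t + c * t ^ 2 / 2) t := fun a b c t => by
    refine ((((hasDerivAt_id' t).const_mul a).add
      (((hasDerivAt_pow 2 t).const_mul b).div_const 2)).add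
      (((hasDerivAt_pow 3 t).const_mul c).div_const 6)).congr_deriv ?_
    push_cast; ring
  have hfirst : ∀ t ∈ Ioo (0 : ℝ) 1, φ' t ≤ φ' 0 + φ'' 0 * t + M * t ^ 2 / 2 := by
    intro t ht
    have := sub_le_sub_of_hasDerivAt_le ht.1.le hφ' (hpoly (φ'' 0) M 0)
      fun s hs => by simpa using hφ'' s ⟨hs.1.le, hs.2.le.trans ht.2.le⟩
    linarith
  have := sub_le_sub_of_hasDerivAt_le zero_le_one hφ (hpoly (φ' 0) (φ'' 0) M) hfirst
  linarith

section
variable {E : Type*} [NormedAddCommGroup E] [InnerProductSpace ℝ E]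

theorem ContinuousLinearMap.inner_apply_self_le_opNorm_mul_sq (A : E →L[ℝ] E) (v : E) :
    ⟪A v, v⟫ ≤ ‖A‖ * ‖v‖ ^ 2 :=
  calc ⟪A v, v⟫ ≤ ‖A v‖ * ‖v‖ := real_inner_le_norm _ _
    _ ≤ ‖A‖ * ‖v‖ * ‖v‖ := by gcongr; exact A.le_opNorm v
    _ = ‖A‖ * ‖v‖ ^ 2 := by ring

theorem apply_add_le_of_lipschitz_hessian [CompleteSpace E] {f : E → ℝ} {g : E → E}
    {H : E → E →L[ℝ] E} {L : ℝ} (hgrad : ∀ x, HasGradientAt f (g x) x)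
    (hhess : ∀ x, HasFDerivAt g (H x) x) (hLip : ∀ x y, ‖H x - H y‖ ≤ L * ‖x - y‖)
    (x δ : E) : f (x + δ) ≤ f x + ⟪g x, δ⟫ + ⟪H x δ, δ⟫ / 2 + L / 6 * ‖δ‖ ^ 3 := by
  have hline : ∀ t : ℝ, HasDerivAt (fun s : ℝ => x + s • δ) δ t := fun t => by
    simpa using ((hasDerivAt_id t).smul_const δ).const_add x
  have hφ : ∀ t : ℝ, HasDerivAt (fun s : ℝ => f (x + s • δ)) ⟪g (x + t • δ), δ⟫ t := fun t => by
    simpa [Function.comp_def] using (hgrad _).hasFDerivAt.comp_hasDerivAt t (hline t)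
  have hφ' : ∀ t : ℝ, HasDerivAt (fun s : ℝ => ⟪g (x + s • δ), δ⟫) ⟪H (x + t • δ) δ, δ⟫ t :=
    fun t => by
      simpa using ((hhess _).comp_hasDerivAt t (hline t)).inner ℝ (hasDerivAt_const t δ)
  have hφ'' : ∀ t ∈ Icc (0 : ℝ) 1,
      ⟪H (x + t • δ) δ, δ⟫ ≤ ⟪H x δ, δ⟫ + L * ‖δ‖ ^ 3 * t := by
    intro t ht
    have hdist : ‖x + t • δ - x‖ = t * ‖δ‖ := by
      rw [add_sub_cancel_left, norm_smul, Real.norm_of_nonneg ht.1]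
    calc ⟪H (x + t • δ) δ, δ⟫ = ⟪H x δ, δ⟫ + ⟪(H (x + t • δ) - H x) δ, δ⟫ := by
          rw [sub_apply, inner_sub_left]; ring
      _ ≤ ⟪H x δ, δ⟫ + ‖H (x + t • δ) - H x‖ * ‖δ‖ ^ 2 := by
          gcongr; exact ContinuousLinearMap.inner_apply_self_le_opNorm_mul_sq _ _
      _ ≤ ⟪H x δ, δ⟫ + L * (t * ‖δ‖) * ‖δ‖ ^ 2 := by
          gcongr; exact hdist ▸ hLip (x + t • δ) x
      _ = ⟪H x δ, δ⟫ + L * ‖δ‖ ^ 3 * t := by ring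
  have := image_one_le_of_deriv2_le_add_mul hφ hφ' (by simpa only [zero_smul, add_zero] using hφ'')
  simp only [one_smul, zero_smul, add_zero] at this
  linarith
end

theorem LinearMap.IsSymmetric.inner_apply_self_le_iSup_eigenvalues_mul_sq
    {E : Type*} [NormedAddCommGroup E] [InnerProductSpace ℝ E] [FiniteDimensional ℝ E]
    {T : E →ₗ[ℝ] E} (hT : T.IsSymmetric) {n : ℕ} (hn : Module.finrank ℝ E = n) (v : E) :
    ⟪T v, v⟫ ≤ (⨆ i, hT.eigenvalues hn i) * ‖v‖ ^ 2 := by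
  set b := hT.eigenvectorBasis hn
  calc ⟪T v, v⟫ = ∑ i, hT.eigenvalues hn i * b.repr v i ^ 2 := by
        rw [← b.repr.inner_map_map, PiLp.inner_apply]
        refine Finset.sum_congr rfl fun i _ => ?_
        rw [hT.eigenvectorBasis_apply_self_apply, RCLike.inner_apply, conj_trivial,
          RCLike.ofReal_real_eq_id, id_eq]
        ring
    _ ≤ ∑ i, (⨆ j, hT.eigenvalues hn j) * b.repr v i ^ 2 := by
        gcongr with i
        exact le_ciSup (Set.finite_range _).bddAbove i
    _ = (⨆ i, hT.eigenvalues hn i) * ‖v‖ ^ 2 := by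
        rw [← Finset.mul_sum, ← b.repr.norm_map, EuclideanSpace.norm_sq_eq]
        simp only [Real.norm_eq_abs, sq_abs]

theorem Matrix.IsHermitian.inner_toEuclideanLin_self_le_iSup_eigenvalues_mul_sq
    {ι : Type*} [Fintype ι] [DecidableEq ι] {A : Matrix ι ι ℝ} (hA : A.IsHermitian)
    (v : EuclideanSpace ℝ ι) :
    ⟪Matrix.toEuclideanLin A v, v⟫ ≤ (⨆ i, hA.eigenvalues i) * ‖v‖ ^ 2 := by
  have := (Matrix.isSymmetric_toEuclideanLin_iff.mpr hA).inner_apply_self_le_iSup_eigenvalues_mul_sq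
    finrank_euclideanSpace v
  convert this using 3
  exact (Fintype.equivOfCardEq (Fintype.card_fin _)).symm.iSup_comp

theorem Matrix.inner_toEuclideanLin_transpose_mul_mul_self {ι : Type*} [Fintype ι] [DecidableEq ι]
    (B H : Matrix ι ι ℝ) (u : EuclideanSpace ℝ ι) :
    ⟪Matrix.toEuclideanLin (Bᵀ * H * B) u, u⟫ =
      ⟪Matrix.toEuclideanLin H (Matrix.toEuclideanLin B u), Matrix.toEuclideanLin B u⟫ := by
  simp only [EuclideanSpace.inner_eq_star_dotProduct, Matrix.ofLp_toLpLin, Matrix.toLin'_apply,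
    star_trivial, ← Matrix.mulVec_mulVec, Matrix.dotProduct_mulVec, Matrix.vecMul_transpose]

theorem EuclideanSpace.norm_le_sqrt_sum_sq_of_abs_le {ι : Type*} [Fintype ι]
    {v : EuclideanSpace ℝ ι} {w : ι → ℝ} (hv : ∀ i, |v i| ≤ w i) :
    ‖v‖ ≤ √(∑ i, w i ^ 2) := by
  rw [EuclideanSpace.norm_eq]
  gcongr with i
  rw [Real.norm_eq_abs]
  exact hv i

theorem EuclideanSpace.inner_le_sum_abs_mul_of_abs_le {ι : Type*} [Fintype ι]
    {x v : EuclideanSpace ℝ ι} {w : ι → ℝ} (hv : ∀ i, |v i| ≤ w i) :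
    ⟪x, v⟫ ≤ ∑ i, |w i * x i| := by
  simp only [PiLp.inner_apply, RCLike.inner_apply, conj_trivial]
  gcongr with i
  calc v i * x i ≤ |v i| * |x i| := by rw [← abs_mul]; exact le_abs_self _
    _ ≤ w i * |x i| := by gcongr; exact hv i
    _ ≤ |w i * x i| := by rw [abs_mul]; gcongr; exact le_abs_self _

theorem Matrix.inner_toEuclideanLin_self_le_of_abs_div_le_one {ι : Type*} [Fintype ι]
    [DecidableEq ι] {H : Matrix ι ι ℝ} {d : ι → ℝ} (hd : ∀ i, d i ≠ 0)
    (hDHD : (diagonal d * H * diagonal d).IsHermitian) {δ : EuclideanSpace ℝ ι}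
    (hδ : ∀ i, |δ i / d i| ≤ 1) :
    ⟪toEuclideanLin H δ, δ⟫ ≤ Fintype.card ι * max (⨆ i, hDHD.eigenvalues i) 0 := by
  set u : EuclideanSpace ℝ ι := WithLp.toLp 2 fun i => δ i / d i
  have hδu : toEuclideanLin (diagonal d) u = δ := by
    ext i
    simp [u, mulVec_diagonal, mul_div_cancel₀ _ (hd i)]
  have hu_sq : ‖u‖ ^ 2 ≤ Fintype.card ι := by
    have := EuclideanSpace.norm_le_sqrt_sum_sq_of_abs_le (v := u) (w := 1) hδ
    simpa using pow_le_pow_left₀ (norm_nonneg u) this 2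
  rw [← hδu, ← inner_toEuclideanLin_transpose_mul_mul_self, diagonal_transpose]
  calc _ ≤ (⨆ i, hDHD.eigenvalues i) * ‖u‖ ^ 2 :=
        hDHD.inner_toEuclideanLin_self_le_iSup_eigenvalues_mul_sq u
    _ ≤ max (⨆ i, hDHD.eigenvalues i) 0 * Fintype.card ι := by gcongr; exact le_max_left _ _
    _ = Fintype.card ι * max (⨆ i, hDHD.eigenvalues i) 0 := mul_comm _ _

open Finset in
theorem second_order_certificate_linf_general {n : ℕ}
    (f : EuclideanSpace ℝ (Fin n) → ℝ)
    (g : EuclideanSpace ℝ (Fin n) → EuclideanSpace ℝ (Fin n))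
    (Hm : EuclideanSpace ℝ (Fin n) → Matrix (Fin n) (Fin n) ℝ)
    (L : ℝ) (hL : 0 ≤ L)
    (d : Fin n → ℝ) (hd : ∀ i, 0 < d i)
    (hgrad : ∀ x, HasGradientAt f (g x) x)
    (hhess : ∀ x, HasFDerivAt g
      (LinearMap.toContinuousLinearMap (Matrix.toEuclideanLin (Hm x))) x)
    (hLip : ∀ x y, ‖LinearMap.toContinuousLinearMap (Matrix.toEuclideanLin (Hm x - Hm y))‖
        ≤ L * ‖x - y‖)
    (xc : EuclideanSpace ℝ (Fin n))
    (hDHD : (Matrix.diagonal d * Hm xc * Matrix.diagonal d).IsHermitian) :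
    ∀ δ : EuclideanSpace ℝ (Fin n), (∀ i, |δ i / d i| ≤ 1) →
      f (xc + δ) ≤ f xc + (∑ i, |d i * g xc i|)
        + ((n : ℝ) / 2) * max (⨆ i, hDHD.eigenvalues i) 0
        + (L / 6) * (Real.sqrt (∑ i, (d i) ^ 2)) ^ 3 := by
  intro δ hδ
  have hδd : ∀ i, |δ i| ≤ d i := fun i => by
    simpa only [abs_div, abs_of_pos (hd i), div_le_one (hd i)] using hδ i
  have htaylor := apply_add_le_of_lipschitz_hessian hgrad hhess
    (H := fun x => LinearMap.toContinuousLinearMap (Matrix.toEuclideanLin (Hm x)))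
    (fun x y => by simpa only [map_sub] using hLip x y) xc δ
  have hlin : ⟪g xc, δ⟫ ≤ ∑ i, |d i * g xc i| :=
    EuclideanSpace.inner_le_sum_abs_mul_of_abs_le hδd
  have hquad := Matrix.inner_toEuclideanLin_self_le_of_abs_div_le_one (fun i => (hd i).ne') hDHD hδ
  rw [Fintype.card_fin] at hquad
  have hcubic : L / 6 * ‖δ‖ ^ 3 ≤ L / 6 * √(∑ i, d i ^ 2) ^ 3 := by
    gcongr
    exact EuclideanSpace.norm_le_sqrt_sum_sq_of_abs_le hδd
  simp only [LinearMap.coe_toContinuousLinearMap'] at htaylor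
  linarith

open Finset in
/-- Proposition 3: second-order split-and-bound certificate for a
generalized `ℓ∞` input set `‖D⁻¹δ‖_∞ ≤ 1`, `D = diag d` positive definite:
`sup f(x_c+δ) ≤ f x_c + ‖D ∇f x_c‖₁ + (n/2) max(λ_max(D ∇²f(x_c) D), 0) + (L/6) ‖D‖_F³`. -/
theorem second_order_certificate_linf {n : ℕ} (hn : 0 < n)
    (f : EuclideanSpace ℝ (Fin n) → ℝ)
    (g : EuclideanSpace ℝ (Fin n) → EuclideanSpace ℝ (Fin n))
    (Hm : EuclideanSpace ℝ (Fin n) → Matrix (Fin n) (Fin n) ℝ)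
    (hsym : ∀ x, (Hm x).IsHermitian) (L : ℝ) (hL : 0 ≤ L)
    (d : Fin n → ℝ) (hd : ∀ i, 0 < d i)
    (hgrad : ∀ x, HasGradientAt f (g x) x)
    (hhess : ∀ x, HasFDerivAt g
      (LinearMap.toContinuousLinearMap (Matrix.toEuclideanLin (Hm x))) x)
    (hHcont : Continuous Hm)
    (hLip : ∀ x y, ‖LinearMap.toContinuousLinearMap (Matrix.toEuclideanLin (Hm x - Hm y))‖
        ≤ L * ‖x - y‖)
    (xc : EuclideanSpace ℝ (Fin n))
    (hDHD : (Matrix.diagonal d * Hm xc * Matrix.diagonal d).IsHermitian) :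
    ∀ δ : EuclideanSpace ℝ (Fin n), (∀ i, |δ i / d i| ≤ 1) →
      f (xc + δ) ≤ f xc + (∑ i, |d i * g xc i|)
        + ((n : ℝ) / 2) * max (⨆ i, hDHD.eigenvalues i) 0
        + (L / 6) * (Real.sqrt (∑ i, (d i) ^ 2)) ^ 3 :=
  second_order_certificate_linf_general f g Hm L hL d hd hgrad hhess hLip xc hDHD
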